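/- The group G₁ of order 64 with presentation ⟨a, b | a^16 = 1, b^4 = 1, [b,a] = a^4⟩ does not satisfy property (*); that is, G₁ does not embed as a subgroup of index 2 in any group generated by involutions. -/

import Mathlib

/-- A group `G` satisfies property (*) if it embeds as a subgroup of index 2 in
some group `Γ` generated by involutions (elements of order exactly 2). -/
def SatisfiesStar (G : Type*) [Group G] : Prop :=
  ∃ (Γ : Type) (_ : Group Γ) (f : G →* Γ),
    Function.Injective f ∧ f.range.index = 2 ∧
    Subgroup.closure {x : Γ | orderOf x = 2} = ⊤

/-- The relators of the presentation `⟨a, b | a^16, b^4, [b,a] = a^4⟩`, where `a` is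
`FreeGroup.of true`, `b` is `FreeGroup.of false`, and `[b,a] = b⁻¹a⁻¹ba`. -/
def G1Rels : Set (FreeGroup Bool) :=
  { FreeGroup.of true ^ 16,
    FreeGroup.of false ^ 4,
    (FreeGroup.of false)⁻¹ * (FreeGroup.of true)⁻¹ * FreeGroup.of false *
      FreeGroup.of true * (FreeGroup.of true ^ 4)⁻¹ }

/-- The group `G₁ = ⟨a, b | a^16, b^4, [b,a] = a^4⟩` of order 64. -/
abbrev G1 : Type := PresentedGroup G1Rels

/-!
If `G₁` had index two in a group `Γ` generated by involutions, conjugation by an involution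
`t ∉ G₁` would induce an involutive automorphism `σ` of `G₁`, and every involution of `Γ` would be
either an involution `v` of `G₁` or `v t` with `v σ(v) = 1`. A `σ`-invariant character
`ρ : G₁ → ZMod 2` vanishing on all these `v` extends to `Γ` by `t ↦ 0`, so it kills the
generators of `Γ` and is trivial. But `σ` acts on the abelianization `(ZMod 4)²` of `G₁` by a
matrix `M` with `M² = 1`, and `M ≠ -1`, since `σ` would then fix the commutator `[b, a] = a⁴`
while inverting `a⁴`; for every other such `M` a finite check provides a nontrivial `ρ`.
-/

universe u

namespace Subgroup

variable {Γ : Type*} [Group Γ]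

def adjoinInvolution (K : Subgroup Γ) {t : Γ} (ht : t * t = 1)
    (hK : ∀ k ∈ K, t * k * t ∈ K) : Subgroup Γ where
  carrier := {g | g ∈ K ∨ g * t ∈ K}
  one_mem' := Or.inl K.one_mem
  mul_mem' := by
    have conj_mem {g h : Γ} (hg : g ∈ K) (hh : h ∈ K) : g * (t * h * t) ∈ K :=
      K.mul_mem hg (hK h hh)
    rintro g h (hg | hg) (hh | hh)
    · exact Or.inl (K.mul_mem hg hh)
    · exact Or.inr (by simpa only [mul_assoc] using K.mul_mem hg hh)
    · exact Or.inr
        (by simpa only [mul_assoc, ← mul_assoc t t, ht, one_mul] using conj_mem hg hh)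
    · have := conj_mem hg hh
      simp only [mul_assoc, ← mul_assoc t t, ht, one_mul, mul_one] at this
      exact Or.inl this
  inv_mem' := by
    rintro g (hg | hg)
    · exact Or.inl (K.inv_mem hg)
    · refine Or.inr ?_
      rw [show g⁻¹ * t = t * (g * t)⁻¹ * t by group]
      exact hK _ (K.inv_mem hg)

lemma exists_orderOf_eq_two_notMem {H : Subgroup Γ} (hH : H ≠ ⊤)
    (hgen : closure {x : Γ | orderOf x = 2} = ⊤) : ∃ t, orderOf t = 2 ∧ t ∉ H := by
  by_contra! h
  exact hH (top_le_iff.mp (hgen ▸ (closure_le H).mpr h))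

/-- The involutions outside `H` are the `x t` with `x ∈ H` and `x (t x t) = 1`, so all
involutions lie in the subgroup `K ∪ K t`. -/
theorem le_of_involutions_mem {H K : Subgroup Γ} (hH : H.index = 2)
    (hgen : closure {x : Γ | orderOf x = 2} = ⊤) {t : Γ} (ht : t * t = 1) (htH : t ∉ H)
    (hKH : K ≤ H) (hKt : ∀ k ∈ K, t * k * t ∈ K) (hsq : ∀ x ∈ H, x * x = 1 → x ∈ K)
    (htw : ∀ x ∈ H, x * (t * x * t) = 1 → x ∈ K) : H ≤ K := by
  have hL : ⊤ ≤ K.adjoinInvolution ht hKt := by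
    rw [← hgen, closure_le]
    intro x hx
    have hxx : x * x = 1 := by rw [← sq, ← hx, pow_orderOf_eq_one]
    by_cases hxH : x ∈ H
    · exact Or.inl (hsq x hxH hxx)
    · refine Or.inr (htw _ ?_ ?_)
      · simp [mul_mem_iff_of_index_two hH, hxH, htH]
      · simp only [mul_assoc, ← mul_assoc t t, ht, one_mul, ← mul_assoc x x, hxx]
  intro h hh
  rcases hL (mem_top h) with hk | hk
  · exact hk
  · exact absurd ((H.mul_mem_cancel_left hh).mp (hKH hk)) htH

end Subgroup

/-- The conditions under which `ρ`, extended by `σ ↦ 1` to `G ⋊ ⟨σ⟩`, is a homomorphism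
killing every involution: those are the `v` with `v * v = 1` and the `v σ` with
`v * σ v = 1`. -/
structure KillsInvolutions {G A : Type*} [Group G] [Group A] (σ : G →* G) (ρ : G →* A) :
    Prop where
  comp_eq : ρ.comp σ = ρ
  map_of_mul_self : ∀ v, v * v = 1 → ρ v = 1
  map_of_mul_map_self : ∀ v, v * σ v = 1 → ρ v = 1

/-- `σ` is conjugation by an involution `t` outside `G`; the kernel of `ρ` together with its
coset by `t` is a subgroup containing all involutions. -/
theorem SatisfiesStar.exists_involutive_forall_killsInvolutions {G : Type*} [Group G]
    (hG : SatisfiesStar G) : ∃ σ : G →* G, Function.Involutive σ ∧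
      ∀ {A : Type u} [Group A] (ρ : G →* A), KillsInvolutions σ ρ → ρ = 1 := by
  obtain ⟨Γ, _, f, hf, hidx, hgen⟩ := hG
  obtain ⟨t, ht2, htH⟩ := Subgroup.exists_orderOf_eq_two_notMem
    (H := f.range) (fun h ↦ by simp [h] at hidx) hgen
  have ht : t * t = 1 := by rw [← sq, ← ht2, pow_orderOf_eq_one]
  have := Subgroup.normal_of_index_eq_two hidx
  let E := MonoidHom.ofInjective hf
  let σ : G →* G := E.symm.toMonoidHom.comp ((MulAut.conjNormal t).toMonoidHom.comp E)
  have hσ (v : G) : f (σ v) = t * f v * t := by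
    simp [σ, E, MonoidHom.apply_ofInjective_symm, MonoidHom.ofInjective_apply,
      inv_eq_of_mul_eq_one_right ht]
  refine ⟨σ, fun v ↦ hf ?_, fun ρ hρ ↦ ?_⟩
  · simp only [hσ, mul_assoc, ← mul_assoc t t, ht, one_mul, mul_one]
  have hmem (v : G) : f v ∈ ρ.ker.map f ↔ ρ v = 1 := Subgroup.mem_map_iff_mem hf
  have hle := Subgroup.le_of_involutions_mem (K := ρ.ker.map f) hidx hgen ht htH
    (Subgroup.map_le_range f _)
    (by
      rintro _ ⟨v, hv, rfl⟩
      rw [← hσ, hmem, ← MonoidHom.comp_apply, hρ.comp_eq]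
      exact hv)
    (by
      rintro _ ⟨v, rfl⟩ hv
      rw [hmem]
      exact hρ.map_of_mul_self v (hf (by simpa using hv)))
    (by
      rintro _ ⟨v, rfl⟩ hv
      rw [hmem]
      exact hρ.map_of_mul_map_self v (hf (by simpa [← hσ] using hv)))
  ext v
  exact (hmem v).mp (hle ⟨v, rfl⟩)

namespace G1

def a : G1 := PresentedGroup.of true
def b : G1 := PresentedGroup.of false

lemma hom_ext {H : Type*} [Group H] {φ ψ : G1 →* H} (ha : φ a = ψ a) (hb : φ b = ψ b) :
    φ = ψ :=
  PresentedGroup.ext fun x ↦ by cases x <;> assumption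

lemma commutator_eq : b⁻¹ * a⁻¹ * b * a = a ^ 4 := by
  have h : PresentedGroup.mk G1Rels ((FreeGroup.of false)⁻¹ * (FreeGroup.of true)⁻¹ *
      FreeGroup.of false * FreeGroup.of true * (FreeGroup.of true ^ 4)⁻¹) = 1 :=
    (QuotientGroup.eq_one_iff _).mpr (Subgroup.subset_normalClosure (by simp [G1Rels]))
  simp only [map_mul, map_inv, map_pow, mul_inv_eq_one] at h
  exact h

/-- `5` has order `4` in `(ZMod 16)ˣ`. -/
def twist (n : ZMod 4) : ZMod 16 := 5 ^ n.val

lemma twist_add : ∀ x y : ZMod 4, twist (x + y) = twist x * twist y := by decide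

/-- The semidirect product `ZMod 16 ⋊ ZMod 4`, isomorphic to `G₁`. -/
@[ext] structure Model where
  m : ZMod 16
  n : ZMod 4
deriving DecidableEq, Fintype

namespace Model

instance : Mul Model := ⟨fun x y ↦ ⟨x.m + twist x.n * y.m, x.n + y.n⟩⟩
instance : One Model := ⟨⟨0, 0⟩⟩
instance : Inv Model := ⟨fun x ↦ ⟨-(twist (-x.n) * x.m), -x.n⟩⟩

@[simp] lemma mul_m (x y : Model) : (x * y).m = x.m + twist x.n * y.m := rfl
@[simp] lemma mul_n (x y : Model) : (x * y).n = x.n + y.n := rfl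
@[simp] lemma one_m : (1 : Model).m = 0 := rfl
@[simp] lemma one_n : (1 : Model).n = 0 := rfl
@[simp] lemma inv_m (x : Model) : x⁻¹.m = -(twist (-x.n) * x.m) := rfl
@[simp] lemma inv_n (x : Model) : x⁻¹.n = -x.n := rfl

instance : Group Model where
  mul_assoc x y z := Model.ext (by simp [twist_add]; ring) (by simp [add_assoc])
  one_mul x := Model.ext (by simp [twist]) (by simp)
  mul_one x := Model.ext (by simp) (by simp)
  inv_mul_cancel x := Model.ext (by simp) (by simp)

def abel : Model →* Multiplicative (ZMod 4 × ZMod 4) where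
  toFun x := .ofAdd (ZMod.castHom (by norm_num : 4 ∣ 16) (ZMod 4) x.m, x.n)
  map_one' := rfl
  map_mul' x y := by
    have htwist : ∀ n, ZMod.castHom (by norm_num : 4 ∣ 16) (ZMod 4) (twist n) = 1 := by decide
    simp only [mul_m, mul_n, map_add, map_mul, htwist, one_mul, ← ofAdd_add, Prod.mk_add_mk]

set_option maxRecDepth 100000 in
lemma commutator_ne_pow_four_of_abel_eq_neg : ∀ x y : Model,
    (abel x).toAdd = (-1, 0) → (abel y).toAdd = (0, -1) → y⁻¹ * x⁻¹ * y * x ≠ x ^ 4 := by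
  decide

end Model

def toModel : G1 →* Model :=
  PresentedGroup.toGroup (f := fun x ↦ cond x ⟨1, 0⟩ ⟨0, 1⟩) <| by
    simp only [G1Rels, Set.mem_insert_iff, Set.mem_singleton_iff]
    rintro r (rfl | rfl | rfl) <;>
      simp only [map_mul, map_inv, map_pow, FreeGroup.lift_apply_of] <;> decide

def abel : G1 →* Multiplicative (ZMod 4 × ZMod 4) := Model.abel.comp toModel

lemma abel_a : abel a = .ofAdd (1, 0) := rfl
lemma abel_b : abel b = .ofAdd (0, 1) := rfl

lemma toAdd_abel_apply (σ : G1 →* G1) (v : G1) :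
    (abel (σ v)).toAdd =
      (abel v).toAdd.1 • (abel (σ a)).toAdd + (abel v).toAdd.2 • (abel (σ b)).toAdd := by
  let L := (LinearMap.toSpanSingleton (ZMod 4) _ (abel (σ a)).toAdd).coprod
    (LinearMap.toSpanSingleton (ZMod 4) _ (abel (σ b)).toAdd)
  have h : abel.comp σ = (AddMonoidHom.toMultiplicative L.toAddMonoidHom).comp abel :=
    hom_ext (by simp [abel_a, L]) (by simp [abel_b, L])
  exact congr(($h v).toAdd)

lemma abel_map_generators_ne_neg (σ : G1 →* G1) :
    ((abel (σ a)).toAdd, (abel (σ b)).toAdd) ≠ ((-1, 0), (0, -1)) := by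
  intro h
  simp only [Prod.mk.injEq] at h
  apply Model.commutator_ne_pow_four_of_abel_eq_neg _ _ h.1 h.2
  simpa using congr(toModel (σ $commutator_eq))

def parity (ε : ZMod 2 × ZMod 2) : ZMod 4 × ZMod 4 →+ ZMod 2 :=
  let r : ZMod 4 →+ ZMod 2 := (ZMod.castHom (by norm_num : 2 ∣ 4) (ZMod 2)).toAddMonoidHom
  (ε.1 • r).coprod (ε.2 • r)

lemma parity_eq_zero_of_add_self : ∀ (ε : ZMod 2 × ZMod 2) (x : ZMod 4 × ZMod 4),
    x + x = 0 → parity ε x = 0 := by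
  decide

set_option synthInstance.maxSize 256 in
/-- `u` and `w` are the columns of a matrix `M` over `ZMod 4` with `M ^ 2 = 1` and `M ≠ -1`. -/
lemma exists_parity_of_involutive : ∀ u w : ZMod 4 × ZMod 4,
    u.1 • u + u.2 • w = (1, 0) → w.1 • u + w.2 • w = (0, 1) → (u, w) ≠ ((-1, 0), (0, -1)) →
    ∃ ε : ZMod 2 × ZMod 2, ε ≠ 0 ∧
      (∀ x : ZMod 4 × ZMod 4, parity ε (x.1 • u + x.2 • w) = parity ε x) ∧
      ∀ x : ZMod 4 × ZMod 4, x + (x.1 • u + x.2 • w) = 0 → parity ε x = 0 := by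
  decide

theorem exists_killsInvolutions (σ : G1 →* G1) (hσ : Function.Involutive σ) :
    ∃ ρ : G1 →* Multiplicative (ZMod 2), ρ ≠ 1 ∧ KillsInvolutions σ ρ := by
  have hu := toAdd_abel_apply σ (σ a)
  have hw := toAdd_abel_apply σ (σ b)
  rw [hσ, abel_a] at hu
  rw [hσ, abel_b] at hw
  obtain ⟨ε, hε, hfix, hker⟩ :=
    exists_parity_of_involutive _ _ hu.symm hw.symm (abel_map_generators_ne_neg σ)
  let ρ := (parity ε).toMultiplicative.comp abel
  have hρ (v : G1) : (ρ v).toAdd = parity ε (abel v).toAdd := rfl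
  refine ⟨ρ, fun h ↦ hε ?_, ⟨?_, fun v hv ↦ ?_, fun v hv ↦ ?_⟩⟩
  · ext
    · simpa [hρ, abel_a, parity] using congr(($h a).toAdd)
    · simpa [hρ, abel_b, parity] using congr(($h b).toAdd)
  · refine MonoidHom.ext fun v ↦ Multiplicative.toAdd.injective ?_
    rw [MonoidHom.comp_apply, hρ, hρ, toAdd_abel_apply, hfix]
  · apply Multiplicative.toAdd.injective
    rw [hρ]
    exact parity_eq_zero_of_add_self ε _ (by simpa using congr((abel $hv).toAdd))
  · apply Multiplicative.toAdd.injective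
    rw [hρ]
    exact hker _ (by simpa [toAdd_abel_apply σ v] using congr((abel $hv).toAdd))

end G1

/-- `G₁` does not satisfy property (*). -/
theorem G1_not_satisfiesStar : ¬ SatisfiesStar G1 := by
  intro hG
  obtain ⟨σ, hσ, h_eq_one⟩ := hG.exists_involutive_forall_killsInvolutions
  obtain ⟨ρ, hρ, hkill⟩ := G1.exists_killsInvolutions σ hσ
  exact hρ (h_eq_one ρ hkill)
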